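/- Let F : ℝ × M → M be the complete flow of a vector field X on M, and let k be a positive integer. If o : ℝ/ℤ → M is a non-constant periodic orbit of period p (i.e., o(t) = F(pt, o(0))) whose multiplicity m = p/(least period of o) satisfies m < k, then the loop 𝐨(t) = [ (o(t/k), o(t/k + 1/k), …, o(t/k + (k−1)/k)) ] in M'/(ℤ/k) is well defined (the k points o(t/k + j/k), j = 0,…,k−1, are pairwise distinct) and is a periodic orbit of the induced vector field 𝐗 on M'/(ℤ/k) of period p/k, with multiplicity m. -/

import Mathlib

open Set Filter Topology

/-- The quotient of `M^k` by the cyclic shift `(x₁,…,x_k) ↦ (x₂,…,x_k,x₁)`. -/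
def CycQuot (M : Type*) (k : ℕ) [NeZero k] :=
  Quot (fun a b : Fin k → M => (fun i => a (i + 1)) = b)

/-- The map on the cyclic quotient induced by a coordinatewise application of `F s`. -/
def indFlow {M : Type*} (k : ℕ) [NeZero k] (F : ℝ → M → M) (s : ℝ) :
    CycQuot M k → CycQuot M k :=
  Quot.map (fun x i => F s (x i)) (by intro a b h; subst h; rfl)

/-!
Write `x = o 0`. Since `ℓ` is the least positive return time of `x`, the return times form the
subgroup `ℓℤ` of `ℝ` (a subgroup of `ℝ` with a least positive element is cyclic), so
`o s = o s'` exactly when `m (s - s') ∈ ℤ`. For two of the points `o (t/k + j/k)` this says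
`k ∣ m (i - j)`, which forces `i = j` because `k` is prime and `0 < m < k`.

The induced flow for time `ℓ/k` moves every point of the tuple by `1/(mk)` in the parameter,
and modulo `1/m` this is the cyclic shift by `c/k`, where `m c ≡ 1 (mod k)`. Conversely, if the
class of the tuple is fixed by the flow for time `q > 0`, some cyclic shift `c` gives
`F q (o (c/k)) = o 0`, so `q k / ℓ` is a positive integer and `q ≥ ℓ/k`.
-/

structure IsFlow {M : Type*} (F : ℝ → M → M) : Prop where
  map_zero : ∀ x, F 0 x = x
  map_add : ∀ s t x, F (s + t) x = F s (F t x)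

namespace IsFlow

variable {M : Type*} {F : ℝ → M → M}

theorem map_eq_map_iff (hF : IsFlow F) {a b : ℝ} {x : M} :
    F a x = F b x ↔ F (a - b) x = x := by
  constructor
  · intro h
    rw [sub_eq_neg_add, hF.map_add, h, ← hF.map_add, neg_add_cancel, hF.map_zero]
  · intro h
    calc F a x = F (b + (a - b)) x := by rw [add_sub_cancel]
      _ = F b x := by rw [hF.map_add, h]

def returnTimes (hF : IsFlow F) (x : M) : AddSubgroup ℝ where
  carrier := {s | F s x = x}
  zero_mem' := hF.map_zero x
  add_mem' {s t} (hs : F s x = x) (ht : F t x = x) := by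
    change F (s + t) x = x
    rw [hF.map_add, ht, hs]
  neg_mem' {s} (hs : F s x = x) := by
    calc F (-s) x = F (-s) (F s x) := by rw [hs]
      _ = x := by rw [← hF.map_add, neg_add_cancel, hF.map_zero]

theorem returnTimes_eq_zmultiples (hF : IsFlow F) {x : M} {ℓ : ℝ}
    (hℓ : IsLeast {q | 0 < q ∧ F q x = x} ℓ) :
    hF.returnTimes x = AddSubgroup.zmultiples ℓ := by
  rw [AddSubgroup.zmultiples_eq_closure]
  exact AddSubgroup.cyclic_of_min ⟨⟨hℓ.1.2, hℓ.1.1⟩, fun q hq => hℓ.2 ⟨hq.2, hq.1⟩⟩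

theorem map_eq_map_iff_exists_int (hF : IsFlow F) {x : M} {ℓ : ℝ}
    (hℓ : IsLeast {q | 0 < q ∧ F q x = x} ℓ) {a b : ℝ} :
    F a x = F b x ↔ ∃ n : ℤ, a - b = n * ℓ := by
  rw [hF.map_eq_map_iff]
  change a - b ∈ hF.returnTimes x ↔ _
  simp only [hF.returnTimes_eq_zmultiples hℓ, AddSubgroup.mem_zmultiples_iff, zsmul_eq_mul, eq_comm]

end IsFlow

namespace CycQuot

variable {M : Type*} {k : ℕ} [NeZero k]

open Fin.NatCast in
theorem mk_comp_add_natCast (a : Fin k → M) (n : ℕ) :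
    (Quot.mk _ (fun i : Fin k => a (i + (n : Fin k))) : CycQuot M k) = Quot.mk _ a := by
  induction n with
  | zero => simp only [Nat.cast_zero, add_zero]
  | succ n ih =>
    rw [← ih]
    refine (Quot.sound ?_).symm
    funext i
    rw [Nat.cast_succ, add_assoc, add_comm 1]

theorem exists_add_eq_of_mk_eq {a b : Fin k → M}
    (h : (Quot.mk _ a : CycQuot M k) = Quot.mk _ b) : ∃ c : Fin k, ∀ i, a (i + c) = b i := by
  have hgen := Quot.eqvGen_exact h
  clear h
  induction hgen with
  | rel x y hxy => exact ⟨1, fun i => congrFun hxy i⟩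
  | refl x => exact ⟨0, fun i => by rw [add_zero]⟩
  | symm x y _ ih =>
    obtain ⟨c, hc⟩ := ih
    exact ⟨-c, fun i => by rw [← hc, neg_add_cancel_right]⟩
  | trans x y z _ _ ih₁ ih₂ =>
    obtain ⟨c₁, hc₁⟩ := ih₁
    obtain ⟨c₂, hc₂⟩ := ih₂
    exact ⟨c₁ + c₂, fun i => by rw [add_comm c₁, ← add_assoc, hc₁, hc₂]⟩

end CycQuot

theorem indFlow_mk {M : Type*} (k : ℕ) [NeZero k] (F : ℝ → M → M) (s : ℝ) (a : Fin k → M) :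
    indFlow k F s (Quot.mk _ a) = Quot.mk _ (fun i => F s (a i)) := rfl

namespace Function.Periodic

variable {M : Type*} {f : ℝ → M}

theorem apply_natMod_div (hf : Periodic f 1) (j k : ℕ) :
    f (((j % k : ℕ) : ℝ) / k) = f (j / k) := by
  rcases eq_or_ne k 0 with rfl | hk
  · rw [Nat.mod_zero]
  have hk' : (k : ℝ) ≠ 0 := Nat.cast_ne_zero.2 hk
  have hj : (j : ℝ) = (j % k : ℕ) + k * (j / k : ℕ) := by
    exact_mod_cast (Nat.mod_add_div j k).symm
  rw [hj, add_div, mul_div_cancel_left₀ _ hk', ← mul_one ((j / k : ℕ) : ℝ), hf.nat_mul]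

open Fin.NatCast in
theorem cycQuot_mk_add_natCast (hf : Periodic f 1) (k : ℕ) [NeZero k] (n : ℕ) :
    (Quot.mk _ (fun j : Fin k => f (((j : ℝ) + n) / k)) : CycQuot M k) =
      Quot.mk _ (fun j : Fin k => f (j / k)) := by
  refine Eq.trans ?_ (CycQuot.mk_comp_add_natCast _ n)
  congr 1
  funext j
  rw [Fin.val_add, Fin.val_natCast, Nat.add_mod_mod, hf.apply_natMod_div, Nat.cast_add]

theorem cycQuot_mk_add_one_div (hf : Periodic f 1) (k : ℕ) [NeZero k] (t : ℝ) :
    (Quot.mk _ (fun j : Fin k => f ((t + 1) / k + (j : ℝ) / k)) : CycQuot M k) =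
      Quot.mk _ (fun j : Fin k => f (t / k + (j : ℝ) / k)) := by
  refine Eq.trans ?_ ((hf.const_add (t / k)).cycQuot_mk_add_natCast k 1)
  congr 1
  funext j
  congr 1
  push_cast
  ring

end Function.Periodic

theorem Fin.eq_of_dvd_mul_sub {k m : ℕ} (hk : k.Prime) (hkm : ¬ k ∣ m) {i j : Fin k}
    (h : (k : ℤ) ∣ m * ((i : ℤ) - j)) : i = j := by
  have hij : (k : ℤ) ∣ (i : ℤ) - j :=
    (Int.Prime.dvd_mul' hk h).resolve_left (by exact_mod_cast hkm)
  have : (i : ℤ) - j = 0 := Int.eq_zero_of_abs_lt_dvd hij (by rw [abs_lt]; omega)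
  exact Fin.ext (by omega)

structure IsPeriodicOrbit {M : Type*} (F : ℝ → M → M) (o : ℝ → M) (p ℓ : ℝ) : Prop where
  flow : IsFlow F
  apply_eq : ∀ t, o t = F (p * t) (o 0)
  isLeast_period : IsLeast {q | 0 < q ∧ F q (o 0) = o 0} ℓ

namespace IsPeriodicOrbit

variable {M : Type*} {F : ℝ → M → M} {o : ℝ → M} {p ℓ : ℝ} {m k : ℕ}

theorem flow_apply (h : IsPeriodicOrbit F o p ℓ) (hp : p ≠ 0) (τ s : ℝ) :
    F τ (o s) = o (s + τ / p) := by
  rw [h.apply_eq s, ← h.flow.map_add, h.apply_eq (s + τ / p)]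
  congr 1
  field_simp
  ring

theorem apply_eq_apply_iff (h : IsPeriodicOrbit F o p ℓ) (hm : p = m * ℓ) {s s' : ℝ} :
    o s = o s' ↔ ∃ n : ℤ, m * (s - s') = n := by
  rw [h.apply_eq s, h.apply_eq s', h.flow.map_eq_map_iff_exists_int h.isLeast_period, hm]
  refine exists_congr fun n => ?_
  rw [show (m : ℝ) * ℓ * s - m * ℓ * s' = m * (s - s') * ℓ by ring,
    mul_left_inj' h.isLeast_period.1.1.ne']

theorem periodic (h : IsPeriodicOrbit F o p ℓ) (hm : p = m * ℓ) : Function.Periodic o 1 :=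
  fun t => (h.apply_eq_apply_iff hm).2 ⟨m, by push_cast; ring⟩

theorem injective_tuple (h : IsPeriodicOrbit F o p ℓ) (hm : p = m * ℓ) (hk : k.Prime)
    (hkm : ¬ k ∣ m) (t : ℝ) : Function.Injective (fun j : Fin k => o (t / k + (j : ℝ) / k)) := by
  intro i j hij
  obtain ⟨n, hn⟩ := (h.apply_eq_apply_iff hm).1 hij
  have hk0 : (k : ℝ) ≠ 0 := Nat.cast_ne_zero.2 hk.ne_zero
  refine Fin.eq_of_dvd_mul_sub hk hkm ⟨n, ?_⟩
  have : (m : ℝ) * ((i : ℝ) - j) = k * n := by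
    rw [← hn]
    field_simp
    ring
  exact_mod_cast this

theorem mk_tuple_eq_indFlow [NeZero k] (h : IsPeriodicOrbit F o p ℓ) (hp : p ≠ 0) (t : ℝ) :
    (Quot.mk _ (fun j : Fin k => o (t / k + (j : ℝ) / k)) : CycQuot M k) =
      indFlow k F (p / k * t) (Quot.mk _ (fun j : Fin k => o ((j : ℝ) / k))) := by
  rw [indFlow_mk]
  congr 1
  funext j
  rw [h.flow_apply hp]
  congr 1
  field_simp
  ring

theorem indFlow_div_mk_tuple [NeZero k] (h : IsPeriodicOrbit F o p ℓ) (hm : p = m * ℓ)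
    (hk : k.Prime) (hkm : ¬ k ∣ m) :
    indFlow k F (ℓ / k) (Quot.mk _ (fun j : Fin k => o ((j : ℝ) / k)) : CycQuot M k) =
      Quot.mk _ (fun j : Fin k => o ((j : ℝ) / k)) := by
  obtain ⟨c, -, hc⟩ := Nat.exists_mul_mod_eq_one_of_coprime (hk.coprime_iff_not_dvd.2 hkm).symm
    hk.one_lt
  have hm0 : (m : ℝ) ≠ 0 := Nat.cast_ne_zero.2 fun h0 => hkm (h0 ▸ dvd_zero k)
  have hk0 : (k : ℝ) ≠ 0 := Nat.cast_ne_zero.2 hk.ne_zero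
  have hℓ0 : ℓ ≠ 0 := h.isLeast_period.1.1.ne'
  have hp : p ≠ 0 := hm ▸ mul_ne_zero hm0 hℓ0
  obtain ⟨d, hd⟩ : ∃ d : ℕ, m * c = k * d + 1 := ⟨_, (hc ▸ Nat.div_add_mod (m * c) k).symm⟩
  have hmc : (m : ℝ) * c = k * d + 1 := by exact_mod_cast hd
  rw [indFlow_mk]
  refine Eq.trans ?_ ((h.periodic hm).cycQuot_mk_add_natCast k c)
  congr 1
  funext j
  -- `m (1/(mk) - c/k) = (1 - m c)/k = -d`
  rw [h.flow_apply hp, h.apply_eq_apply_iff hm]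
  refine ⟨-d, ?_⟩
  rw [hm]
  field_simp
  push_cast
  linear_combination -hmc

theorem le_of_indFlow_mk_tuple [NeZero k] (h : IsPeriodicOrbit F o p ℓ) (hm : p = m * ℓ)
    (hp : p ≠ 0) {q : ℝ} (hq : 0 < q)
    (hfix : indFlow k F q (Quot.mk _ (fun j : Fin k => o ((j : ℝ) / k)) : CycQuot M k) =
      Quot.mk _ (fun j : Fin k => o ((j : ℝ) / k))) : ℓ / k ≤ q := by
  rw [indFlow_mk] at hfix
  obtain ⟨c, hc⟩ := CycQuot.exists_add_eq_of_mk_eq hfix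
  have h0 := hc 0
  rw [zero_add, h.flow_apply hp, Fin.val_zero, Nat.cast_zero, zero_div] at h0
  obtain ⟨n, hn⟩ := (h.apply_eq_apply_iff hm).1 h0
  have hℓ := h.isLeast_period.1.1
  have hm0 : (m : ℝ) ≠ 0 := left_ne_zero_of_mul (hm ▸ hp)
  have hk : (0 : ℝ) < k := Nat.cast_pos.2 (Nat.pos_of_neZero k)
  set N : ℤ := n * k - m * c
  have hqk : q * k = N * ℓ := by
    rw [hm] at hn
    field_simp at hn
    push_cast [N]
    linear_combination hn
  have hN : (0 : ℤ) < N := by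
    exact_mod_cast pos_of_mul_pos_left (hqk ▸ mul_pos hq hk) hℓ.le
  rw [div_le_iff₀ hk, hqk]
  exact le_mul_of_one_le_left hℓ.le (by exact_mod_cast hN)

end IsPeriodicOrbit

theorem stmt6_general {M : Type*} (k : ℕ) (hk : Nat.Prime k) [NeZero k]
    (F : ℝ → M → M) (hF0 : ∀ x, F 0 x = x) (hFadd : ∀ s t x, F (s + t) x = F s (F t x))
    (o : ℝ → M) (p : ℝ) (hp : 0 < p)
    (ho : ∀ t, o t = F (p * t) (o 0))
    (ℓ : ℝ) (hℓpos : 0 < ℓ) (hℓ : F ℓ (o 0) = o 0)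
    (hℓleast : ∀ q : ℝ, 0 < q → F q (o 0) = o 0 → ℓ ≤ q)
    (m : ℕ) (hm : p = m * ℓ) (hmk : m < k) :
    (∀ t : ℝ, Function.Injective (fun j : Fin k => o (t / k + (j : ℝ) / k))) ∧
    (∀ t : ℝ,
      (Quot.mk _ (fun j : Fin k => o ((t + 1) / k + (j : ℝ) / k)) : CycQuot M k) =
        Quot.mk _ (fun j : Fin k => o (t / k + (j : ℝ) / k))) ∧
    (∀ t : ℝ,
      (Quot.mk _ (fun j : Fin k => o (t / k + (j : ℝ) / k)) : CycQuot M k) =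
        indFlow k F (p / k * t) (Quot.mk _ (fun j : Fin k => o ((j : ℝ) / k)))) ∧
    (indFlow k F (ℓ / k) (Quot.mk _ (fun j : Fin k => o ((j : ℝ) / k)) : CycQuot M k) =
        Quot.mk _ (fun j : Fin k => o ((j : ℝ) / k)) ∧
      ∀ q : ℝ, 0 < q →
        indFlow k F q (Quot.mk _ (fun j : Fin k => o ((j : ℝ) / k)) : CycQuot M k) =
          Quot.mk _ (fun j : Fin k => o ((j : ℝ) / k)) → ℓ / k ≤ q) := by
  have horbit : IsPeriodicOrbit F o p ℓ :=
    ⟨⟨hF0, hFadd⟩, ho, ⟨hℓpos, hℓ⟩, fun q hq => hℓleast q hq.1 hq.2⟩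
  have hm0 : 0 < m := by
    rw [hm] at hp
    exact_mod_cast pos_of_mul_pos_left hp hℓpos.le
  have hkm : ¬ k ∣ m := Nat.not_dvd_of_pos_of_lt hm0 hmk
  exact ⟨horbit.injective_tuple hm hk hkm, (horbit.periodic hm).cycQuot_mk_add_one_div k,
    horbit.mk_tuple_eq_indFlow hp.ne', horbit.indFlow_div_mk_tuple hm hk hkm,
    fun q hq => horbit.le_of_indFlow_mk_tuple hm hp.ne' hq⟩

/-- Fuller's correspondence: if `o` is a non-constant period-`p` orbit of the flow `F`
(of a vector field `X`), with least period `ℓ`, multiplicity `m = p/ℓ < k`, `k` prime,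
then the `k` points `o(t/k + j/k)` are pairwise distinct, and the induced loop
`𝐨(t) = [(o(t/k), …, o(t/k+(k−1)/k))]` in `M^k/(ℤ/k)` is a periodic orbit of the induced
flow of period `p/k` whose least period is `ℓ/k` (i.e. its multiplicity is again `m`). -/
theorem stmt6 {M : Type*} (k : ℕ) (hk : Nat.Prime k) [NeZero k]
    (F : ℝ → M → M) (hF0 : ∀ x, F 0 x = x) (hFadd : ∀ s t x, F (s + t) x = F s (F t x))
    (o : ℝ → M) (p : ℝ) (hp : 0 < p)
    (ho : ∀ t, o t = F (p * t) (o 0)) (hper : ∀ t, o (t + 1) = o t)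
    (hnonconst : ∃ t, o t ≠ o 0)
    (ℓ : ℝ) (hℓpos : 0 < ℓ) (hℓ : F ℓ (o 0) = o 0)
    (hℓleast : ∀ q : ℝ, 0 < q → F q (o 0) = o 0 → ℓ ≤ q)
    (m : ℕ) (hm : p = m * ℓ) (hmk : m < k) :
    (∀ t : ℝ, Function.Injective (fun j : Fin k => o (t / k + (j : ℝ) / k))) ∧
    (∀ t : ℝ,
      (Quot.mk _ (fun j : Fin k => o ((t + 1) / k + (j : ℝ) / k)) : CycQuot M k) =
        Quot.mk _ (fun j : Fin k => o (t / k + (j : ℝ) / k))) ∧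
    (∀ t : ℝ,
      (Quot.mk _ (fun j : Fin k => o (t / k + (j : ℝ) / k)) : CycQuot M k) =
        indFlow k F (p / k * t) (Quot.mk _ (fun j : Fin k => o ((j : ℝ) / k)))) ∧
    (indFlow k F (ℓ / k) (Quot.mk _ (fun j : Fin k => o ((j : ℝ) / k)) : CycQuot M k) =
        Quot.mk _ (fun j : Fin k => o ((j : ℝ) / k)) ∧
      ∀ q : ℝ, 0 < q →
        indFlow k F q (Quot.mk _ (fun j : Fin k => o ((j : ℝ) / k)) : CycQuot M k) =
          Quot.mk _ (fun j : Fin k => o ((j : ℝ) / k)) → ℓ / k ≤ q) :=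
  stmt6_general k hk F hF0 hFadd o p hp ho ℓ hℓpos hℓ hℓleast m hm hmk
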